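/- arXiv:1501.04583 — 7 statements merged into one kernel-verified Lean document; each statement's English description precedes it below -/
import Mathlib

section
/- In ℝ²₁, for points p, q in the causal future of the x-axis (i.e., with nonnegative t-coordinate), p ≤ q if and only if J⁻(p) ∩ ({0} × ℝ) ⊆ J⁻(q) ∩ ({0} × ℝ). -/
def mLe (p q : ℝ × ℝ) : Prop := |q.2 - p.2| ≤ q.1 - p.1

def Jminus (p : ℝ × ℝ) : Set (ℝ × ℝ) := {q | mLe q p}

def Jplus (q : ℝ × ℝ) : Set (ℝ × ℝ) := {p | mLe q p}

def axisR : Set (ℝ × ℝ) := {q | q.1 = 0}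

theorem le_iff_shadow_subset (p q : ℝ × ℝ) (hp : 0 ≤ p.1) (hq : 0 ≤ q.1) :
    mLe p q ↔ Jminus p ∩ axisR ⊆ Jminus q ∩ axisR := by
  constructor
  · rintro h r ⟨hr, ha⟩
    simp only [mLe, Jminus, axisR, Set.mem_setOf_eq, Set.mem_inter_iff] at *
    rw [ha] at hr ⊢
    refine ⟨?_, rfl⟩
    have := abs_sub_abs_le_abs_sub (q.2 - r.2) (p.2 - r.2)
    have h2 : |q.2 - r.2 - (p.2 - r.2)| = |q.2 - p.2| := by ring_nf
    rw [h2] at this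
    linarith [abs_nonneg (q.2 - p.2)]
  · intro h
    have h1 := h (show ((0 : ℝ), p.2 + p.1) ∈ Jminus p ∩ axisR by
      constructor
      · simp only [Jminus, mLe, Set.mem_setOf_eq, abs_le]; constructor <;> simp <;> linarith
      · rfl)
    have h2 := h (show ((0 : ℝ), p.2 - p.1) ∈ Jminus p ∩ axisR by
      constructor
      · simp only [Jminus, mLe, Set.mem_setOf_eq, abs_le]; constructor <;> simp <;> linarith
      · rfl)
    simp only [Jminus, mLe, axisR, Set.mem_inter_iff, Set.mem_setOf_eq, abs_le] at h1 h2 ⊢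
    obtain ⟨⟨a1, a2⟩, _⟩ := h1
    obtain ⟨⟨b1, b2⟩, _⟩ := h2
    constructor <;> linarith
end

section
/- Let f : ℝ² → ℝ² be a bijection preserving the Minkowski causal order in both directions (x ≤ y iff f(x) ≤ f(y)) and preserving the chronological relation << (t₂ - t₁ > |x₂ - x₁|) in both directions; then f maps light rays (null lines x ± t = const, as unordered families) to light rays. -/
/-- The chronological relation on ℝ²₁. -/
def mLt (p q : ℝ × ℝ) : Prop := |q.2 - p.2| < q.1 - p.1

/-- A null line (light ray) in ℝ²₁. -/
def IsNullLine (L : Set (ℝ × ℝ)) : Prop :=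
  (∃ c : ℝ, L = {p : ℝ × ℝ | p.2 + p.1 = c}) ∨ (∃ c : ℝ, L = {p : ℝ × ℝ | p.2 - p.1 = c})

/-- Two points lie on a common null line. -/
def NullRel (p q : ℝ × ℝ) : Prop := q.2 - p.2 = q.1 - p.1 ∨ q.2 - p.2 = p.1 - q.1

lemma aux_abs (u v : ℝ) :
    (v = u ∨ v = -u) ↔ ((|v| ≤ u ∨ |v| ≤ -u) ∧ ¬(|v| < u) ∧ ¬(|v| < -u)) := by
  rcases abs_cases v with ⟨h, h0⟩ | ⟨h, h0⟩ <;> rw [h] <;>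
    constructor <;> intro hh
  · rcases hh with hh | hh
    · exact ⟨Or.inl (le_of_eq hh), by rw [hh]; simp, by intro hc; linarith⟩
    · exact ⟨Or.inr (le_of_eq hh), by intro hc; linarith, by rw [hh]; simp⟩
  · obtain ⟨h1, h2, h3⟩ := hh
    push_neg at h2 h3
    rcases h1 with h1 | h1
    · exact Or.inl (le_antisymm h1 h2)
    · exact Or.inr (le_antisymm h1 h3)
  · rcases hh with hh | hh
    · exact ⟨Or.inr (by linarith), by intro hc; linarith, by intro hc; linarith⟩
    · exact ⟨Or.inl (by linarith), by intro hc; linarith, by intro hc; linarith⟩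
  · obtain ⟨h1, h2, h3⟩ := hh
    push_neg at h2 h3
    rcases h1 with h1 | h1
    · exact Or.inr (by linarith)
    · exact Or.inl (by linarith)

lemma nullrel_iff (p q : ℝ × ℝ) :
    NullRel p q ↔ ((mLe p q ∨ mLe q p) ∧ ¬ mLt p q ∧ ¬ mLt q p) := by
  have h1 : |p.2 - q.2| = |q.2 - p.2| := abs_sub_comm _ _
  have h2 : p.1 - q.1 = -(q.1 - p.1) := by ring
  unfold NullRel mLe mLt
  rw [h1, h2]
  exact aux_abs (q.1 - p.1) (q.2 - p.2)

lemma collin_plus (a b r : ℝ × ℝ) (hab : a ≠ b) (hline : b.2 + b.1 = a.2 + a.1)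
    (h1 : NullRel a r) (h2 : NullRel b r) : r.2 + r.1 = a.2 + a.1 := by
  rcases h1 with h1 | h1
  · rcases h2 with h2 | h2
    · exfalso
      apply hab
      have e1 : a.1 = b.1 := by linarith
      have e2 : a.2 = b.2 := by linarith
      exact Prod.ext e1 e2
    · linarith
  · linarith

lemma collin_minus (a b r : ℝ × ℝ) (hab : a ≠ b) (hline : b.2 - b.1 = a.2 - a.1)
    (h1 : NullRel a r) (h2 : NullRel b r) : r.2 - r.1 = a.2 - a.1 := by
  rcases h1 with h1 | h1
  · linarith
  · rcases h2 with h2 | h2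
    · linarith
    · exfalso
      apply hab
      have e1 : a.1 = b.1 := by linarith
      have e2 : a.2 = b.2 := by linarith
      exact Prod.ext e1 e2

theorem causal_bijection_maps_light_rays_to_light_rays (f : ℝ × ℝ → ℝ × ℝ)
    (hbij : Function.Bijective f)
    (hcaus : ∀ p q : ℝ × ℝ, mLe p q ↔ mLe (f p) (f q))
    (hchron : ∀ p q : ℝ × ℝ, mLt p q ↔ mLt (f p) (f q)) :
    ∀ L : Set (ℝ × ℝ), IsNullLine L → IsNullLine (f '' L) := by
  have hN : ∀ p q : ℝ × ℝ, NullRel p q ↔ NullRel (f p) (f q) := by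
    intro p q
    rw [nullrel_iff, nullrel_iff, hcaus p q, hcaus q p, hchron p q, hchron q p]
  intro L hL
  rcases hL with ⟨c, rfl⟩ | ⟨c, rfl⟩
  · -- L = {p | p.2 + p.1 = c}
    set a : ℝ × ℝ := (0, c) with ha
    set b : ℝ × ℝ := (1, c - 1) with hb
    have haL : a.2 + a.1 = c := by simp [ha]
    have hbL : b.2 + b.1 = c := by simp [hb]
    have hab : a ≠ b := by
      intro h
      have := congrArg Prod.fst h
      simp [ha, hb] at this
    have hfab : f a ≠ f b := fun h => hab (hbij.1 h)
    have hNab : NullRel a b := Or.inr (by simp [ha, hb])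
    have hNfab : NullRel (f a) (f b) := (hN a b).1 hNab
    -- every point of L is null-related to both a and b
    have hmem : ∀ p : ℝ × ℝ, p.2 + p.1 = c → NullRel a p ∧ NullRel b p := by
      intro p hp
      constructor
      · exact Or.inr (by simp [ha]; linarith)
      · exact Or.inr (by simp [hb]; linarith)
    rcases hNfab with hd | hd
    · -- f a, f b on a "minus" null line
      right
      refine ⟨(f a).2 - (f a).1, ?_⟩
      have hfline : (f b).2 - (f b).1 = (f a).2 - (f a).1 := by linarith
      ext q
      constructor
      · rintro ⟨p, hp, rfl⟩
        obtain ⟨hpa, hpb⟩ := hmem p hp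
        exact collin_minus (f a) (f b) (f p) hfab hfline ((hN a p).1 hpa) ((hN b p).1 hpb)
      · intro hq
        obtain ⟨r, rfl⟩ := hbij.2 q
        have hqa : NullRel (f a) (f r) := by
          simp only [Set.mem_setOf_eq] at hq
          exact Or.inl (by linarith)
        have hqb : NullRel (f b) (f r) := by
          simp only [Set.mem_setOf_eq] at hq
          exact Or.inl (by linarith)
        have hra := (hN a r).2 hqa
        have hrb := (hN b r).2 hqb
        have : r.2 + r.1 = a.2 + a.1 :=
          collin_plus a b r hab (by linarith) hra hrb
        exact ⟨r, by simpa [Set.mem_setOf_eq] using (by linarith : r.2 + r.1 = c), rfl⟩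
    · -- f a, f b on a "plus" null line
      left
      refine ⟨(f a).2 + (f a).1, ?_⟩
      have hfline : (f b).2 + (f b).1 = (f a).2 + (f a).1 := by linarith
      ext q
      constructor
      · rintro ⟨p, hp, rfl⟩
        obtain ⟨hpa, hpb⟩ := hmem p hp
        exact collin_plus (f a) (f b) (f p) hfab hfline ((hN a p).1 hpa) ((hN b p).1 hpb)
      · intro hq
        obtain ⟨r, rfl⟩ := hbij.2 q
        have hqa : NullRel (f a) (f r) := by
          simp only [Set.mem_setOf_eq] at hq
          exact Or.inr (by linarith)
        have hqb : NullRel (f b) (f r) := by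
          simp only [Set.mem_setOf_eq] at hq
          exact Or.inr (by linarith)
        have hra := (hN a r).2 hqa
        have hrb := (hN b r).2 hqb
        have : r.2 + r.1 = a.2 + a.1 :=
          collin_plus a b r hab (by linarith) hra hrb
        exact ⟨r, by simpa [Set.mem_setOf_eq] using (by linarith : r.2 + r.1 = c), rfl⟩
  · -- L = {p | p.2 - p.1 = c}
    set a : ℝ × ℝ := (0, c) with ha
    set b : ℝ × ℝ := (1, c + 1) with hb
    have haL : a.2 - a.1 = c := by simp [ha]
    have hbL : b.2 - b.1 = c := by simp [hb]
    have hab : a ≠ b := by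
      intro h
      have := congrArg Prod.fst h
      simp [ha, hb] at this
    have hfab : f a ≠ f b := fun h => hab (hbij.1 h)
    have hNab : NullRel a b := Or.inl (by simp [ha, hb])
    have hNfab : NullRel (f a) (f b) := (hN a b).1 hNab
    have hmem : ∀ p : ℝ × ℝ, p.2 - p.1 = c → NullRel a p ∧ NullRel b p := by
      intro p hp
      constructor
      · exact Or.inl (by simp [ha]; linarith)
      · exact Or.inl (by simp [hb]; linarith)
    rcases hNfab with hd | hd
    · right
      refine ⟨(f a).2 - (f a).1, ?_⟩
      have hfline : (f b).2 - (f b).1 = (f a).2 - (f a).1 := by linarith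
      ext q
      constructor
      · rintro ⟨p, hp, rfl⟩
        obtain ⟨hpa, hpb⟩ := hmem p hp
        exact collin_minus (f a) (f b) (f p) hfab hfline ((hN a p).1 hpa) ((hN b p).1 hpb)
      · intro hq
        obtain ⟨r, rfl⟩ := hbij.2 q
        have hqa : NullRel (f a) (f r) := by
          simp only [Set.mem_setOf_eq] at hq
          exact Or.inl (by linarith)
        have hqb : NullRel (f b) (f r) := by
          simp only [Set.mem_setOf_eq] at hq
          exact Or.inl (by linarith)
        have hra := (hN a r).2 hqa
        have hrb := (hN b r).2 hqb
        have : r.2 - r.1 = a.2 - a.1 :=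
          collin_minus a b r hab (by linarith) hra hrb
        exact ⟨r, by simpa [Set.mem_setOf_eq] using (by linarith : r.2 - r.1 = c), rfl⟩
    · left
      refine ⟨(f a).2 + (f a).1, ?_⟩
      have hfline : (f b).2 + (f b).1 = (f a).2 + (f a).1 := by linarith
      ext q
      constructor
      · rintro ⟨p, hp, rfl⟩
        obtain ⟨hpa, hpb⟩ := hmem p hp
        exact collin_plus (f a) (f b) (f p) hfab hfline ((hN a p).1 hpa) ((hN b p).1 hpb)
      · intro hq
        obtain ⟨r, rfl⟩ := hbij.2 q
        have hqa : NullRel (f a) (f r) := by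
          simp only [Set.mem_setOf_eq] at hq
          exact Or.inr (by linarith)
        have hqb : NullRel (f b) (f r) := by
          simp only [Set.mem_setOf_eq] at hq
          exact Or.inr (by linarith)
        have hra := (hN a r).2 hqa
        have hrb := (hN b r).2 hqb
        have : r.2 - r.1 = a.2 - a.1 :=
          collin_minus a b r hab (by linarith) hra hrb
        exact ⟨r, by simpa [Set.mem_setOf_eq] using (by linarith : r.2 - r.1 = c), rfl⟩
end

section
/- The causal order on the two-dimensional Einstein static universe E = ℝ × (ℝ/2πℤ) is antisymmetric, hence a partial order: if p ≤ q and q ≤ p then p = q. -/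
open Real

/-- The two-dimensional Einstein static universe `E = ℝ × (ℝ/2πℤ)`. -/
abbrev E : Type := ℝ × AddCircle (2 * Real.pi)

/-- The covering map `π(t,x) = (t, x mod 2π)`. -/
noncomputable def proj (p : ℝ × ℝ) : E := (p.1, (p.2 : AddCircle (2 * Real.pi)))

/-- The causal order on `E`, defined via lifts to Minkowski space. -/
def eLe (a b : E) : Prop := ∃ p q : ℝ × ℝ, proj p = a ∧ proj q = b ∧ mLe p q

theorem eLe_antisymm (a b : E) (hab : eLe a b) (hba : eLe b a) : a = b := by
  obtain ⟨p, q, hp, hq, h⟩ := hab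
  obtain ⟨p', q', hp', hq', h'⟩ := hba
  unfold proj at hp hq hp' hq'
  unfold mLe at h h'
  have ha1 : a.1 = p.1 := by rw [← hp]
  have hb1 : b.1 = q.1 := by rw [← hq]
  have hb1' : b.1 = p'.1 := by rw [← hp']
  have ha1' : a.1 = q'.1 := by rw [← hq']
  have h1 : q.1 - p.1 ≥ 0 := le_trans (abs_nonneg _) h
  have h1' : q'.1 - p'.1 ≥ 0 := le_trans (abs_nonneg _) h'
  have hteq : p.1 = q.1 := by
    linarith [ha1, hb1, hb1', ha1', h1, h1']
  have h2 : |q.2 - p.2| ≤ 0 := by rw [← hteq] at h; simpa using h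
  have h2' : q.2 = p.2 := by
    have := abs_nonpos_iff.mp h2
    linarith
  have ha : a = (p.1, (p.2 : AddCircle (2 * Real.pi))) := hp.symm
  have hb : b = (q.1, (q.2 : AddCircle (2 * Real.pi))) := hq.symm
  rw [ha, hb, hteq, h2']
end

section
/- Explicitly, in the Einstein static universe E, (t₁,θ₁) ≤ (t₂,θ₂) iff t₂ - t₁ ≥ d(θ₁,θ₂) or t₂ - t₁ ≥ π, where d is the standard arc-length metric on the circle ℝ/2πℤ. -/
open Real

/-!
The quotient map `ℝ → ℝ/2πℤ` is 1-Lipschitz and every circle distance is attained by a suitable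
lift, so `(t₁,θ₁) ≤ (t₂,θ₂)` holds exactly when `d(θ₁,θ₂) ≤ t₂ - t₁`. Since `d ≤ π` always, the
alternative `π ≤ t₂ - t₁` is absorbed by the first one.
-/

namespace AddCircle

variable {p : ℝ}

theorem exists_coe_eq_and_abs_eq_norm (θ : AddCircle p) :
    ∃ z : ℝ, (z : AddCircle p) = θ ∧ |z| = ‖θ‖ := by
  obtain ⟨x, rfl⟩ := QuotientAddGroup.mk_surjective θ
  refine ⟨x - round (p⁻¹ * x) * p, ?_, by rw [norm_eq]⟩
  simp [← zsmul_eq_mul, coe_period]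

theorem dist_coe_le (x y : ℝ) : dist (x : AddCircle p) y ≤ dist x y := by
  rw [dist_eq_norm, dist_eq_norm, ← coe_sub]
  exact QuotientAddGroup.norm_mk_le_norm

theorem exists_coe_eq_and_dist_eq (x : ℝ) (θ : AddCircle p) :
    ∃ y : ℝ, (y : AddCircle p) = θ ∧ dist x y = dist (x : AddCircle p) θ := by
  obtain ⟨z, hz, hnorm⟩ := exists_coe_eq_and_abs_eq_norm (θ - (x : AddCircle p))
  refine ⟨x + z, by rw [coe_add, hz, add_sub_cancel], ?_⟩
  rw [dist_eq_norm', dist_eq_norm', add_sub_cancel_left, Real.norm_eq_abs, hnorm]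

theorem dist_le_half_period (hp : p ≠ 0) (θ₁ θ₂ : AddCircle p) : dist θ₁ θ₂ ≤ |p| / 2 := by
  rw [dist_eq_norm]
  exact norm_le_half_period p hp

end AddCircle

theorem eLe_iff_dist_le (a b : E) : eLe a b ↔ dist a.2 b.2 ≤ b.1 - a.1 := by
  constructor
  · rintro ⟨p, q, rfl, rfl, hpq⟩
    calc dist (p.2 : AddCircle (2 * π)) q.2 ≤ dist p.2 q.2 := AddCircle.dist_coe_le _ _
      _ ≤ q.1 - p.1 := by rwa [Real.dist_eq, abs_sub_comm]
  · intro h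
    obtain ⟨x, hx⟩ := QuotientAddGroup.mk_surjective a.2
    obtain ⟨y, hy, hdist⟩ := AddCircle.exists_coe_eq_and_dist_eq x b.2
    refine ⟨(a.1, x), (b.1, y), by simp [proj, hx], by simp [proj, hy], ?_⟩
    show |y - x| ≤ b.1 - a.1
    rwa [← Real.dist_eq, dist_comm, hdist, hx]

theorem eLe_iff_dist (t₁ t₂ : ℝ) (θ₁ θ₂ : AddCircle (2 * Real.pi)) :
    eLe (t₁, θ₁) (t₂, θ₂) ↔ (dist θ₁ θ₂ ≤ t₂ - t₁ ∨ Real.pi ≤ t₂ - t₁) := by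
  have hdist : dist θ₁ θ₂ ≤ π := by
    simpa [abs_of_pos pi_pos] using AddCircle.dist_le_half_period (by positivity) θ₁ θ₂
  rw [eLe_iff_dist_le, or_iff_left_of_imp hdist.trans]
end

section
/- The map F : ℝ² → E = ℝ × (ℝ/2πℤ) defined via the conformal compactification of two-dimensional Minkowski space, F(t,x) = (arctan(t+x) + arctan(t-x), (arctan(t+x) - arctan(t-x)) mod 2π), is injective and is a causal isomorphism onto its image: p ≤ q in Minkowski order iff F(p) ≤ F(q) in the Einstein static universe causal order. -/
open Real

/-- The conformal compactification map of ℝ²₁ into the Einstein static universe. -/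
noncomputable def F (p : ℝ × ℝ) : E :=
  (Real.arctan (p.1 + p.2) + Real.arctan (p.1 - p.2),
    ((Real.arctan (p.1 + p.2) - Real.arctan (p.1 - p.2) : ℝ) : AddCircle (2 * Real.pi)))

lemma addCircle_coe_eq_iff (c x y : ℝ) :
    ((x : AddCircle c) = y) ↔ ∃ k : ℤ, y = x + k * c := by
  rw [QuotientAddGroup.eq_iff_sub_mem, AddSubgroup.mem_zmultiples_iff]
  constructor
  · rintro ⟨k, hk⟩; exact ⟨-k, by push_cast [zsmul_eq_mul] at hk ⊢; linarith⟩
  · rintro ⟨k, hk⟩; exact ⟨-k, by push_cast [zsmul_eq_mul]; linarith⟩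

lemma arctan_abs_lt (x : ℝ) : |Real.arctan x| < Real.pi / 2 :=
  abs_lt.2 ⟨Real.neg_pi_div_two_lt_arctan x, Real.arctan_lt_pi_div_two x⟩

theorem conformal_compactification_is_causal_embedding :
    Function.Injective F ∧ (∀ p q : ℝ × ℝ, mLe p q ↔ eLe (F p) (F q)) := by
  have hπ := Real.pi_pos
  constructor
  · intro p q h
    simp only [F, Prod.mk.injEq] at h
    obtain ⟨h1, h2⟩ := h
    rw [addCircle_coe_eq_iff] at h2
    obtain ⟨k, hk⟩ := h2
    have ha := abs_lt.1 (arctan_abs_lt (p.1 + p.2))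
    have hb := abs_lt.1 (arctan_abs_lt (p.1 - p.2))
    have hc := abs_lt.1 (arctan_abs_lt (q.1 + q.2))
    have hd := abs_lt.1 (arctan_abs_lt (q.1 - q.2))
    have hk1 : (-1 : ℤ) < k := by
      have : (-1 : ℝ) < (k : ℝ) := by nlinarith
      exact_mod_cast this
    have hk2 : k < 1 := by
      have : (k : ℝ) < 1 := by nlinarith
      exact_mod_cast this
    have hk0 : k = 0 := by omega
    subst hk0
    simp at hk
    have e1 : Real.arctan (p.1 + p.2) = Real.arctan (q.1 + q.2) := by linarith
    have e2 : Real.arctan (p.1 - p.2) = Real.arctan (q.1 - q.2) := by linarith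
    have f1 := Real.arctan_injective e1
    have f2 := Real.arctan_injective e2
    exact Prod.ext (by linarith) (by linarith)
  · intro p q
    set ap := Real.arctan (p.1 + p.2) with hap
    set bp := Real.arctan (p.1 - p.2) with hbp
    set aq := Real.arctan (q.1 + q.2) with haq
    set bq := Real.arctan (q.1 - q.2) with hbq
    have ha := abs_lt.1 (arctan_abs_lt (p.1 + p.2))
    have hb := abs_lt.1 (arctan_abs_lt (p.1 - p.2))
    have hc := abs_lt.1 (arctan_abs_lt (q.1 + q.2))
    have hd := abs_lt.1 (arctan_abs_lt (q.1 - q.2))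
    rw [← hbp] at hb
    rw [← haq] at hc
    rw [← hbq] at hd
    constructor
    · intro h
      obtain ⟨h1, h2⟩ := abs_le.1 h
      have g1 : ap ≤ aq := Real.arctan_strictMono.monotone (by linarith)
      have g2 : bp ≤ bq := Real.arctan_strictMono.monotone (by linarith)
      exact ⟨(ap + bp, ap - bp), (aq + bq, aq - bq), rfl, rfl,
        abs_le.2 ⟨by dsimp; linarith, by dsimp; linarith⟩⟩
    · rintro ⟨p', q', hp', hq', h⟩
      simp only [proj, F, Prod.ext_iff] at hp' hq'
      obtain ⟨hp1, hp2⟩ := hp'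
      obtain ⟨hq1, hq2⟩ := hq'
      rw [addCircle_coe_eq_iff] at hp2 hq2
      obtain ⟨k, hk⟩ := hp2
      obtain ⟨m, hm⟩ := hq2
      obtain ⟨h1, h2⟩ := abs_le.1 h
      rw [hp1, hq1] at h1 h2
      -- q'.2 - p'.2 = (aq - bq) - (ap - bp) + (k - m) * 2π
      have key1 : ap - π * (k - m) ≤ aq := by nlinarith
      have key2 : bp + π * (k - m) ≤ bq := by nlinarith
      have hn1 : (-1 : ℤ) < k - m := by
        have : (-1 : ℝ) < ((k : ℝ) - m) := by nlinarith
        exact_mod_cast this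
      have hn2 : k - m < 1 := by
        have : ((k : ℝ) - m) < 1 := by nlinarith
        exact_mod_cast this
      have hn0 : k = m := by omega
      subst hn0
      simp at key1 key2
      have g1 : p.1 + p.2 ≤ q.1 + q.2 := Real.arctan_strictMono.le_iff_le.1 key1
      have g2 : p.1 - p.2 ≤ q.1 - q.2 := Real.arctan_strictMono.le_iff_le.1 key2
      exact abs_le.2 ⟨by linarith, by linarith⟩
end

section
/- Let F : ℝ² → ℝ² be a bijection such that for all p, q: p ≤ q iff F(p) ≤ F(q), where ≤ is the Minkowski causal order, and suppose F fixes the x-axis pointwise. Then F is the identity on the causal future and past determined by the axis, i.e., F = id on ℝ². -/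
theorem causal_automorphism_fixing_axis_is_id (F : ℝ × ℝ → ℝ × ℝ)
    (hbij : Function.Bijective F)
    (hcaus : ∀ p q : ℝ × ℝ, mLe p q ↔ mLe (F p) (F q))
    (hfix : ∀ x : ℝ, F (0, x) = (0, x)) :
    F = id := by
  funext p
  obtain ⟨t, x⟩ := p
  set a := (F (t, x)).1 with ha
  set b := (F (t, x)).2 with hb
  have key1 : ∀ y : ℝ, |x - y| ≤ t ↔ |b - y| ≤ a := by
    intro y
    have h := hcaus (0, y) (t, x)
    rw [hfix y] at h
    simpa [mLe] using h
  have key2 : ∀ y : ℝ, |y - x| ≤ -t ↔ |y - b| ≤ -a := by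
    intro y
    have h := hcaus (t, x) (0, y)
    rw [hfix y] at h
    simpa [mLe, zero_sub] using h
  have hid : a = t ∧ b = x := by
    rcases le_or_gt 0 t with ht | ht
    · have h1 := (key1 (x - t)).mp (by rw [show x - (x - t) = t by ring, abs_of_nonneg ht])
      have h2 := (key1 (x + t)).mp (by rw [show x - (x + t) = -t by ring, abs_neg, abs_of_nonneg ht])
      have ha0 : 0 ≤ a := le_trans (abs_nonneg _) h1
      have h3 := (key1 (b - a)).mpr (by rw [show b - (b - a) = a by ring, abs_of_nonneg ha0])
      have h4 := (key1 (b + a)).mpr (by rw [show b - (b + a) = -a by ring, abs_neg, abs_of_nonneg ha0])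
      rw [abs_le] at h1 h2 h3 h4
      constructor <;> linarith [h1.1, h1.2, h2.1, h2.2, h3.1, h3.2, h4.1, h4.2]
    · have ht' : 0 ≤ -t := by linarith
      have h1 := (key2 (x - t)).mp (by rw [show x - t - x = -t by ring, abs_of_nonneg ht'])
      have h2 := (key2 (x + t)).mp (by rw [show x + t - x = t by ring, abs_of_nonpos (le_of_lt ht)])
      have ha0 : 0 ≤ -a := le_trans (abs_nonneg _) h1
      have h3 := (key2 (b - a)).mpr (by rw [show b - a - b = -a by ring, abs_of_nonneg ha0])
      have h4 := (key2 (b + a)).mpr (by rw [show b + a - b = a by ring, abs_of_nonpos (by linarith)])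
      rw [abs_le] at h1 h2 h3 h4
      constructor <;> linarith [h1.1, h1.2, h2.1, h2.2, h3.1, h3.2, h4.1, h4.2]
  show F (t, x) = (t, x)
  exact Prod.ext hid.1 hid.2
end

section
/- For the conformal compactification map F of ℝ²₁ into E, the image F(ℝ²) equals {(τ, θ mod 2π) : |τ| + |θ| < π, θ ∈ (-π, π)}, i.e., the interior of the causal diamond in the cylinder between the points (−π, 0) and (π, 0). -/
open Real

theorem conformal_compactification_range :
    Set.range F =
      {a : E | ∃ θ : ℝ, θ ∈ Set.Ioo (-Real.pi) Real.pi ∧ |a.1| + |θ| < Real.pi ∧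
        a.2 = ((θ : ℝ) : AddCircle (2 * Real.pi))} := by
  ext a
  simp only [Set.mem_range, Set.mem_setOf_eq]
  constructor
  · rintro ⟨p, rfl⟩
    set u := Real.arctan (p.1 + p.2) with hu
    set v := Real.arctan (p.1 - p.2) with hv
    have hu1 : -(Real.pi / 2) < u := Real.neg_pi_div_two_lt_arctan _
    have hu2 : u < Real.pi / 2 := Real.arctan_lt_pi_div_two _
    have hv1 : -(Real.pi / 2) < v := Real.neg_pi_div_two_lt_arctan _
    have hv2 : v < Real.pi / 2 := Real.arctan_lt_pi_div_two _
    refine ⟨u - v, ⟨by linarith, by linarith⟩, ?_, rfl⟩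
    show |u + v| + |u - v| < Real.pi
    rcases abs_cases (u + v) with ⟨h1, _⟩ | ⟨h1, _⟩ <;>
      rcases abs_cases (u - v) with ⟨h2, _⟩ | ⟨h2, _⟩ <;> linarith
  · rintro ⟨θ, ⟨hθ1, hθ2⟩, hlt, hθ⟩
    obtain ⟨τ, θ'⟩ := a
    simp only at hlt hθ ⊢
    set u := (τ + θ) / 2 with hu
    set v := (τ - θ) / 2 with hv
    have hu' : |u| < Real.pi / 2 := by
      rw [hu, abs_div, abs_two]
      rcases abs_cases τ with ⟨h1, _⟩ | ⟨h1, _⟩ <;>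
        rcases abs_cases θ with ⟨h2, _⟩ | ⟨h2, _⟩ <;>
        rcases abs_cases (τ + θ) with ⟨h3, _⟩ | ⟨h3, _⟩ <;> linarith
    have hv' : |v| < Real.pi / 2 := by
      rw [hv, abs_div, abs_two]
      rcases abs_cases τ with ⟨h1, _⟩ | ⟨h1, _⟩ <;>
        rcases abs_cases θ with ⟨h2, _⟩ | ⟨h2, _⟩ <;>
        rcases abs_cases (τ - θ) with ⟨h3, _⟩ | ⟨h3, _⟩ <;> linarith
    rw [abs_lt] at hu' hv'
    refine ⟨((Real.tan u + Real.tan v) / 2, (Real.tan u - Real.tan v) / 2), ?_⟩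
    have h1 : (Real.tan u + Real.tan v) / 2 + (Real.tan u - Real.tan v) / 2 = Real.tan u := by ring
    have h2 : (Real.tan u + Real.tan v) / 2 - (Real.tan u - Real.tan v) / 2 = Real.tan v := by ring
    have hau : Real.arctan (Real.tan u) = u := Real.arctan_tan hu'.1 hu'.2
    have hav : Real.arctan (Real.tan v) = v := Real.arctan_tan hv'.1 hv'.2
    unfold F
    simp only [h1, h2, hau, hav, Prod.mk.injEq]
    constructor
    · rw [hu, hv]; ring
    · rw [hθ]
      congr 1
      rw [hu, hv]; ring
end
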